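/- arXiv:1108.4178 — 5 statements merged into one kernel-verified Lean document; each statement's English description precedes it below -/
import Mathlib

section
/- For any prime p ≥ 7, 2·∑_{k=1}^{p-1} 1/k ≡ -p·∑_{k=1}^{p-1} 1/k² (mod p⁴), where the sums are taken in the p-adic integers (or as rationals with p-adic valuation). -/
/-- `a ≡ b (mod p^n)` in the `p`-adic sense for rationals. -/
def PadicCong (p : ℕ) (n : ℕ) (a b : ℚ) : Prop :=
  padicNorm p (a - b) ≤ (p : ℚ) ^ (-(n : ℤ))

/-!
Pairing `k` with `p - k` and using `k + (p - k) = p` turns `2 H₁ + p H₂` into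
`p³ / 2 · ∑ 1 / (k² (p - k)²)`. Modulo `p` the last sum is `∑ k⁻⁴`, which vanishes because
`x ↦ x⁻¹` permutes `𝔽_p` and `∑_{x ∈ 𝔽_p} x⁴ = 0` for `4 < p - 1`. The reduction modulo `p`
is done in `ℤ_[p]`, where the `k⁻¹` live, through `PadicInt.toZMod`.
-/

open Finset

theorem Finset.sum_Icc_reflect {M : Type*} [AddCommMonoid M] (f : ℕ → M) (n : ℕ) :
    ∑ k ∈ Icc 1 (n - 1), f (n - k) = ∑ k ∈ Icc 1 (n - 1), f k := by
  refine sum_nbij' (n - ·) (n - ·) ?_ ?_ ?_ ?_ (fun _ _ => rfl) <;>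
    intro k hk <;> grind [coe_Icc]

theorem two_mul_sum_inv_add_mul_sum_inv_sq {K : Type*} [Field K] [CharZero K] (n : ℕ) :
    2 * (2 * ∑ k ∈ Icc 1 (n - 1), 1 / (k : K) + n * ∑ k ∈ Icc 1 (n - 1), 1 / (k : K) ^ 2) =
      (n : K) ^ 3 * ∑ k ∈ Icc 1 (n - 1), 1 / ((k : K) ^ 2 * ((n - k : ℕ) : K) ^ 2) := by
  rw [mul_sum, mul_sum, ← sum_add_distrib, two_mul]
  nth_rewrite 1 [← sum_Icc_reflect]
  rw [← sum_add_distrib, mul_sum]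
  refine sum_congr rfl fun k hk => ?_
  obtain ⟨hk1, hkn⟩ := mem_Icc.1 hk
  have hk0 : (k : K) ≠ 0 := Nat.cast_ne_zero.2 (by omega)
  have hnk0 : ((n - k : ℕ) : K) ≠ 0 := Nat.cast_ne_zero.2 (by omega)
  have hn : (n : K) = ((n - k : ℕ) : K) + k := by
    rw [← Nat.cast_add, Nat.sub_add_cancel (by omega)]
  rw [hn]
  field_simp
  ring

theorem ZMod.sum_Icc_inv_pow_eq_zero {p : ℕ} [Fact p.Prime] {m : ℕ} (hm0 : m ≠ 0)
    (hm : m < p - 1) : ∑ k ∈ Icc 1 (p - 1), ((k : ZMod p)⁻¹) ^ m = 0 := by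
  have hIcc : ∑ k ∈ Icc 1 (p - 1), ((k : ZMod p)⁻¹) ^ m =
      ∑ k ∈ range p, ((k : ZMod p)⁻¹) ^ m := by
    refine sum_subset (fun k hk => ?_) (fun k hk hk' => ?_)
    · simp only [mem_Icc, mem_range] at hk ⊢
      omega
    · obtain rfl : k = 0 := by simp only [mem_Icc, mem_range] at hk hk'; omega
      simp [hm0]
  have hrange : ∑ k ∈ range p, ((k : ZMod p)⁻¹) ^ m = ∑ x : ZMod p, x⁻¹ ^ m :=
    sum_nbij' (↑) ZMod.val (by simp) (fun x _ => by simpa using ZMod.val_lt x)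
      (fun k hk => ZMod.val_cast_of_lt (mem_range.1 hk)) (fun x _ => ZMod.natCast_zmod_val x)
      (fun _ _ => rfl)
  rw [hIcc, hrange]
  exact (Equiv.sum_comp (Equiv.inv (ZMod p)) (· ^ m)).trans
    (FiniteField.sum_pow_lt_card_sub_one (ZMod p) m (by rwa [ZMod.card]))

namespace PadicInt

variable {p : ℕ} [Fact p.Prime]

theorem map_inv_natCast {K : Type*} [DivisionRing K] (f : ℤ_[p] →+* K) {n : ℕ}
    (hn : p.Coprime n) : f (n : ℤ_[p]).inv = (n : K)⁻¹ := by
  have h := congrArg f (mul_inv (norm_natCast_eq_one_iff.2 hn))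
  rw [map_mul, map_one, map_natCast] at h
  exact eq_inv_of_mul_eq_one_right h

theorem norm_le_inv_of_toZMod_eq_zero {x : ℤ_[p]} (hx : toZMod x = 0) : ‖x‖ ≤ (p : ℝ)⁻¹ := by
  have hx : x ∈ IsLocalRing.maximalIdeal ℤ_[p] := ker_toZMod (p := p) ▸ hx
  rw [maximalIdeal_eq_span_p, ← pow_one (p : ℤ_[p]), ← norm_le_pow_iff_mem_span_pow] at hx
  simpa using hx

end PadicInt

theorem Padic.norm_sum_inv_sq_mul_inv_sq_le {p : ℕ} [Fact p.Prime] (hp : 5 < p) :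
    ‖((∑ k ∈ Icc 1 (p - 1), 1 / ((k : ℚ) ^ 2 * ((p - k : ℕ) : ℚ) ^ 2) : ℚ) : ℚ_[p])‖ ≤
      (p : ℝ)⁻¹ := by
  have hcop : ∀ k ∈ Icc 1 (p - 1), p.Coprime k ∧ p.Coprime (p - k) := fun k hk => by
    obtain ⟨hk1, hkp⟩ := mem_Icc.1 hk
    exact ⟨Nat.coprime_of_lt_prime (by omega) (by omega) Fact.out,
      Nat.coprime_of_lt_prime (by omega) (by omega) Fact.out⟩
  have hinv (n : ℕ) (hn : p.Coprime n) :
      (((n : ℤ_[p]).inv : ℤ_[p]) : ℚ_[p]) = (n : ℚ_[p])⁻¹ :=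
    PadicInt.map_inv_natCast PadicInt.Coe.ringHom hn
  set z : ℤ_[p] := ∑ k ∈ Icc 1 (p - 1), (k : ℤ_[p]).inv ^ 2 * ((p - k : ℕ) : ℤ_[p]).inv ^ 2
  have hz : (z : ℚ_[p]) =
      ((∑ k ∈ Icc 1 (p - 1), 1 / ((k : ℚ) ^ 2 * ((p - k : ℕ) : ℚ) ^ 2) : ℚ) : ℚ_[p]) := by
    rw [PadicInt.coe_sum]
    push_cast
    refine sum_congr rfl fun k hk => ?_
    rw [hinv k (hcop k hk).1, hinv (p - k) (hcop k hk).2]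
    field_simp
  have hz0 : PadicInt.toZMod z = 0 := by
    rw [map_sum, ← ZMod.sum_Icc_inv_pow_eq_zero (p := p) (m := 4) (by norm_num) (by omega)]
    refine sum_congr rfl fun k hk => ?_
    rw [map_mul, map_pow, map_pow, PadicInt.map_inv_natCast _ (hcop k hk).1,
      PadicInt.map_inv_natCast _ (hcop k hk).2, Nat.cast_sub ((mem_Icc.1 hk).2.trans (Nat.sub_le p 1)),
      ZMod.natCast_self, zero_sub, inv_neg, neg_sq]
    ring
  rw [← hz, PadicInt.padic_norm_e_of_padicInt]
  exact PadicInt.norm_le_inv_of_toZMod_eq_zero hz0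

theorem stmt0 (p : ℕ) (hp : p.Prime) (h7 : 7 ≤ p) :
    PadicCong p 4 (2 * (∑ k ∈ Finset.Icc 1 (p - 1), (1 : ℚ) / (k : ℚ))) (-(p : ℚ) * (∑ k ∈ Finset.Icc 1 (p - 1), (1 : ℚ) / (k : ℚ) ^ 2)) := by
  have := Fact.mk hp
  set T := ∑ k ∈ Icc 1 (p - 1), 1 / ((k : ℚ) ^ 2 * ((p - k : ℕ) : ℚ) ^ 2)
  have hT : ‖(T : ℚ_[p])‖ ≤ (p : ℝ)⁻¹ := Padic.norm_sum_inv_sq_mul_inv_sq_le (by omega)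
  have h2 : ‖(2 : ℚ_[p])‖ = 1 := by
    exact_mod_cast Padic.norm_natCast_eq_one_iff.2
      ((Nat.coprime_primes hp Nat.prime_two).2 (by omega))
  unfold PadicCong
  rw [← Rat.cast_le (K := ℝ), ← Padic.eq_padicNorm,
    show 2 * (∑ k ∈ Icc 1 (p - 1), (1 : ℚ) / k) - -p * ∑ k ∈ Icc 1 (p - 1), (1 : ℚ) / k ^ 2
      = p ^ 3 / 2 * T by linear_combination two_mul_sum_inv_add_mul_sum_inv_sq (K := ℚ) p / 2]
  push_cast
  rw [norm_mul, norm_div, norm_pow, Padic.norm_p, h2, div_one]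
  calc ((p : ℝ)⁻¹) ^ 3 * ‖(T : ℚ_[p])‖ ≤ ((p : ℝ)⁻¹) ^ 3 * (p : ℝ)⁻¹ := by gcongr
    _ = (p : ℝ) ^ (-4 : ℤ) := by
      rw [← pow_succ, ← zpow_natCast, ← zpow_neg_one, ← zpow_mul]
      norm_num
end

section
/- For a prime p ≥ 7, the congruence C(2p-1, p-1) ≡ 1 (mod p⁴) holds if and only if ∑_{k=1}^{p-1} 1/k ≡ 0 (mod p³). -/
open Finset

theorem Nat.cast_add_choose_eq_prod_one_add_div (n r : ℕ) :
    ((n + r).choose r : ℚ) = ∏ k ∈ Icc 1 r, (1 + n / k : ℚ) := by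
  induction r with
  | zero => simp
  | succ r ih =>
    have h : ((n + r + 1 : ℕ) : ℚ) * (n + r).choose r = (n + r + 1).choose (r + 1) * (r + 1) := by
      exact_mod_cast Nat.add_one_mul_choose_eq (n + r) r
    rw [prod_Icc_succ_top (by omega), ← ih, ← add_assoc]
    push_cast at h ⊢
    field_simp
    linarith

@[to_additive sum_Icc_two_mul_eq_sum_add_reflect]
theorem Finset.prod_Icc_two_mul_eq_prod_mul_reflect {M : Type*} [CommMonoid M] (m : ℕ)
    (f : ℕ → M) : ∏ k ∈ Icc 1 (2 * m), f k = ∏ k ∈ Icc 1 m, f k * f (2 * m + 1 - k) := by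
  have hIcc : Icc 1 (2 * m) = Ioc 0 (2 * m) := rfl
  rw [prod_mul_distrib, hIcc, ← prod_Ioc_consecutive _ (Nat.zero_le m) (by omega : m ≤ 2 * m)]
  congr 1
  refine prod_nbij' (fun k => 2 * m + 1 - k) (fun k => 2 * m + 1 - k) ?_ ?_ ?_ ?_ ?_ <;>
    intro k hk <;> simp only [mem_Ioc, mem_Icc] at * <;> try omega
  congr 1
  omega

section OddNumber

variable {p m : ℕ}

theorem cast_choose_two_mul_sub_one_eq_prod (hpm : p = 2 * m + 1) :
    ((2 * p - 1).choose (p - 1) : ℚ) = ∏ k ∈ Icc 1 m, (1 + 2 * p ^ 2 / (k * (p - k)) : ℚ) := by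
  rw [show 2 * p - 1 = p + (p - 1) by omega, Nat.cast_add_choose_eq_prod_one_add_div,
    show p - 1 = 2 * m by omega, prod_Icc_two_mul_eq_prod_mul_reflect]
  refine prod_congr rfl fun k hk => ?_
  rw [mem_Icc] at hk
  have hk0 : (k : ℚ) ≠ 0 := Nat.cast_ne_zero.mpr (by omega)
  have hpk : ((p - k : ℕ) : ℚ) ≠ 0 := Nat.cast_ne_zero.mpr (by omega)
  rw [← hpm, ← Nat.cast_sub (by omega)]
  field_simp
  push_cast [Nat.cast_sub (show k ≤ p by omega)]
  ring

theorem sum_two_mul_sq_div_eq_two_mul_mul_harmonic (hpm : p = 2 * m + 1) :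
    ∑ k ∈ Icc 1 m, (2 * p ^ 2 / (k * (p - k)) : ℚ) = 2 * p * ∑ k ∈ Icc 1 (p - 1), (1 / k : ℚ) := by
  rw [show p - 1 = 2 * m by omega, sum_Icc_two_mul_eq_sum_add_reflect, mul_sum]
  refine sum_congr rfl fun k hk => ?_
  rw [mem_Icc] at hk
  have hk0 : (k : ℚ) ≠ 0 := Nat.cast_ne_zero.mpr (by omega)
  have hpk : ((p - k : ℕ) : ℚ) ≠ 0 := Nat.cast_ne_zero.mpr (by omega)
  rw [← hpm, ← Nat.cast_sub (by omega)]
  field_simp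
  push_cast [Nat.cast_sub (show k ≤ p by omega)]
  ring

end OddNumber

namespace padicNorm

variable {p : ℕ} [Fact p.Prime]

theorem le_iff_of_sub_le {x y r : ℚ} (h : padicNorm p (x - y) ≤ r) :
    padicNorm p x ≤ r ↔ padicNorm p y ≤ r := by
  constructor
  · intro hx
    rw [← sub_sub_self x y]
    exact padicNorm.sub.trans (max_le hx h)
  · intro hy
    rw [← sub_add_cancel x y]
    exact padicNorm.nonarchimedean.trans (max_le h hy)

theorem prod_one_add_sub_one_sub_sum_le {ι : Type*} (s : Finset ι) {c : ι → ℚ} {r : ℚ}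
    (hr : r ≤ 1) (hc : ∀ k ∈ s, padicNorm p (c k) ≤ r) :
    padicNorm p (∏ k ∈ s, (1 + c k) - 1 - ∑ k ∈ s, c k) ≤ r ^ 2 := by
  classical
  induction s using Finset.induction_on with
  | empty => simpa using sq_nonneg r
  | insert a s ha ih =>
    have hca := hc a (mem_insert_self a s)
    have hcs : ∀ k ∈ s, padicNorm p (c k) ≤ r := fun k hk => hc k (mem_insert_of_mem hk)
    have hr0 : 0 ≤ r := (padicNorm.nonneg _).trans hca
    have hE := ih hcs
    have hP : padicNorm p (∏ k ∈ s, (1 + c k) - 1) ≤ r := by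
      rw [← sub_add_cancel (∏ k ∈ s, (1 + c k) - 1) (∑ k ∈ s, c k)]
      exact padicNorm.nonarchimedean.trans
        (max_le (hE.trans (by nlinarith)) (padicNorm.sum_le' hcs hr0))
    have hstep : (1 + c a) * ∏ k ∈ s, (1 + c k) - 1 - (c a + ∑ k ∈ s, c k)
        = (∏ k ∈ s, (1 + c k) - 1 - ∑ k ∈ s, c k) + (∏ k ∈ s, (1 + c k) - 1) * c a := by ring
    rw [prod_insert ha, sum_insert ha, hstep]
    refine padicNorm.nonarchimedean.trans (max_le hE ?_)
    rw [padicNorm.mul, sq]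
    exact mul_le_mul hP hca (padicNorm.nonneg _) hr0

theorem natCast_eq_one_of_pos_of_lt {k : ℕ} (hk0 : 0 < k) (hkp : k < p) :
    padicNorm p (k : ℚ) = 1 :=
  (padicNorm.nat_eq_one_iff k).mpr (Nat.not_dvd_of_pos_of_lt hk0 hkp)

theorem two_mul_sq_div_mul_sub_le {k : ℕ} (hk0 : 0 < k) (hkp : k < p) :
    padicNorm p (2 * p ^ 2 / (k * (p - k)) : ℚ) ≤ (p : ℚ) ^ (-2 : ℤ) := by
  have hp : padicNorm p (p : ℚ) = (p : ℚ)⁻¹ := padicNorm_p (Fact.out : p.Prime).one_lt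
  rw [← Nat.cast_sub hkp.le, padicNorm.div, padicNorm.mul, padicNorm.mul,
    natCast_eq_one_of_pos_of_lt hk0 hkp, natCast_eq_one_of_pos_of_lt (by omega) (by omega : p - k < p),
    sq, padicNorm.mul, hp, mul_one, div_one, zpow_neg, zpow_two, mul_inv]
  exact mul_le_of_le_one_left (by positivity) (padicNorm.of_nat 2)

theorem two_mul_self_mul (hp2 : p ≠ 2) (x : ℚ) :
    padicNorm p (2 * p * x) = (p : ℚ)⁻¹ * padicNorm p x := by
  have h2 : padicNorm p ((2 : ℕ) : ℚ) = 1 :=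
    (nat_eq_one_iff 2).mpr fun h => hp2 ((Nat.prime_dvd_prime_iff_eq Fact.out Nat.prime_two).mp h)
  rw [padicNorm.mul, padicNorm.mul, padicNorm_p (Fact.out : p.Prime).one_lt, ← Nat.cast_ofNat, h2,
    one_mul]

end padicNorm

theorem stmt3 (p : ℕ) (hp : p.Prime) (h7 : 7 ≤ p) :
    PadicCong p 4 ((Nat.choose (2 * p - 1) (p - 1)) : ℚ) 1 ↔ PadicCong p 3 (∑ k ∈ Finset.Icc 1 (p - 1), (1 : ℚ) / (k : ℚ)) 0 := by
  have : Fact p.Prime := ⟨hp⟩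
  obtain ⟨m, hpm⟩ : Odd p := hp.odd_of_ne_two (by omega)
  have hp1 : (1 : ℚ) ≤ p := by exact_mod_cast hp.one_lt.le
  have hE := padicNorm.prod_one_add_sub_one_sub_sum_le (p := p) (Icc 1 m)
    (zpow_le_one_of_nonpos₀ hp1 (by norm_num : (-2 : ℤ) ≤ 0))
    fun k hk => padicNorm.two_mul_sq_div_mul_sub_le (mem_Icc.mp hk).1
      (by have := (mem_Icc.mp hk).2; omega)
  have h4 : ((p : ℚ) ^ (-2 : ℤ)) ^ 2 = (p : ℚ) ^ (-((4 : ℕ) : ℤ)) := by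
    rw [← zpow_natCast _ 2, ← zpow_mul]
    norm_num
  rw [sum_two_mul_sq_div_eq_two_mul_mul_harmonic hpm, h4] at hE
  unfold PadicCong
  rw [sub_zero, cast_choose_two_mul_sub_one_eq_prod hpm,
    padicNorm.le_iff_of_sub_le hE, padicNorm.two_mul_self_mul (by omega),
    show (-((4 : ℕ) : ℤ)) = -1 + -((3 : ℕ) : ℤ) by norm_num, zpow_add₀ (by positivity),
    zpow_neg_one, mul_le_mul_iff_right₀ (by positivity)]
end

section
/- Let p be a Wolstenholme prime. Then C(2p-1, p-1) ≡ 1 + p·∑ 1/k - (p²/2)·∑ 1/k² + (p³/3)·∑ 1/k³ - (p⁴/4)·∑ 1/k⁴ + (p⁵/5)·∑ 1/k⁵ - (p⁶/6)·∑ 1/k⁶ (mod p⁸), where all sums run over k = 1, …, p-1. -/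
open Finset

section ElementarySymmetric

variable {ι R : Type*} [CommRing R]

lemma sum_powersetCard_one_prod (s : Finset ι) (f : ι → R) :
    ∑ A ∈ s.powersetCard 1, ∏ i ∈ A, f i = ∑ i ∈ s, f i := by
  simp [powersetCard_one]

variable [DecidableEq ι]

lemma sum_powersetCard_succ_insert {a : ι} {s : Finset ι} (h : a ∉ s) (n : ℕ)
    (g : Finset ι → R) :
    ∑ A ∈ (insert a s).powersetCard (n + 1), g A =
      ∑ A ∈ s.powersetCard (n + 1), g A + ∑ A ∈ s.powersetCard n, g (insert a A) := by
  rw [powersetCard_succ_insert h, sum_union, sum_image]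
  · intro A hA B hB hAB
    have hA' : a ∉ A := fun ha => h ((mem_powersetCard.1 hA).1 ha)
    have hB' : a ∉ B := fun hb => h ((mem_powersetCard.1 hB).1 hb)
    rw [← erase_insert hA', ← erase_insert hB', hAB]
  · refine disjoint_left.2 fun A hA hA' => ?_
    obtain ⟨B, -, rfl⟩ := mem_image.1 hA'
    exact h ((mem_powersetCard.1 hA).1 (mem_insert_self a B))

lemma sum_powersetCard_prod_insert {a : ι} {s : Finset ι} (h : a ∉ s) (n : ℕ) (f : ι → R) :
    ∑ A ∈ s.powersetCard n, ∏ i ∈ insert a A, f i =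
      f a * ∑ A ∈ s.powersetCard n, ∏ i ∈ A, f i := by
  rw [mul_sum]
  exact sum_congr rfl fun A hA => prod_insert fun ha => h ((mem_powersetCard.1 hA).1 ha)

lemma two_mul_sum_powersetCard_two_prod (s : Finset ι) (f : ι → R) :
    2 * ∑ A ∈ s.powersetCard 2, ∏ i ∈ A, f i =
      (∑ i ∈ s, f i) ^ 2 - ∑ i ∈ s, f i ^ 2 := by
  induction s using Finset.induction with
  | empty => rw [powersetCard_eq_empty.2 (by simp)]; simp
  | insert a s h ih =>
    rw [sum_powersetCard_succ_insert h 1, sum_powersetCard_prod_insert h,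
      sum_powersetCard_one_prod, sum_insert h, sum_insert h]
    linear_combination ih

lemma six_mul_sum_powersetCard_three_prod (s : Finset ι) (f : ι → R) :
    6 * ∑ A ∈ s.powersetCard 3, ∏ i ∈ A, f i =
      (∑ i ∈ s, f i) ^ 3 - 3 * (∑ i ∈ s, f i) * (∑ i ∈ s, f i ^ 2) + 2 * ∑ i ∈ s, f i ^ 3 := by
  induction s using Finset.induction with
  | empty => rw [powersetCard_eq_empty.2 (by simp)]; simp
  | insert a s h ih =>
    rw [sum_powersetCard_succ_insert h 2, sum_powersetCard_prod_insert h, sum_insert h,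
      sum_insert h, sum_insert h]
    linear_combination ih + 3 * f a * two_mul_sum_powersetCard_two_prod s f

end ElementarySymmetric

lemma one_add_esymm_sub_log_eq {ι K : Type*} [Field K] (h2 : (2 : K) ≠ 0) (h3 : (3 : K) ≠ 0)
    (s : Finset ι) (U : ι → K) :
    (1 + ∑ i ∈ s, U i + ∑ A ∈ s.powersetCard 2, ∏ i ∈ A, U i +
      ∑ A ∈ s.powersetCard 3, ∏ i ∈ A, U i) - (1 + ∑ i ∈ s, (U i - U i ^ 2 / 2 + U i ^ 3 / 3)) =
      (∑ i ∈ s, U i) ^ 2 / 2 + (∑ i ∈ s, U i) ^ 3 / 6 -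
        (∑ i ∈ s, U i) * (∑ i ∈ s, U i ^ 2) / 2 := by
  classical
  have h6 : (6 : K) ≠ 0 := by simpa [show (6 : K) = 2 * 3 by norm_num] using ⟨h2, h3⟩
  have he₂ := two_mul_sum_powersetCard_two_prod s U
  have he₃ := six_mul_sum_powersetCard_three_prod s U
  simp only [sum_add_distrib, sum_sub_distrib, ← sum_div]
  generalize ∑ i ∈ s, U i = S₁ at he₂ he₃ ⊢
  generalize ∑ i ∈ s, U i ^ 2 = S₂ at he₂ he₃ ⊢
  generalize ∑ i ∈ s, U i ^ 3 = S₃ at he₃ ⊢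
  generalize ∑ A ∈ s.powersetCard 2, ∏ i ∈ A, U i = e₂ at he₂ ⊢
  generalize ∑ A ∈ s.powersetCard 3, ∏ i ∈ A, U i = e₃ at he₃ ⊢
  field_simp
  linear_combination 18 * he₂ + 6 * he₃

section LogTaylorSix

variable {K : Type*} [Field K] {a b : K}

def logTaylorSix (x : K) : K := x - x ^ 2 / 2 + x ^ 3 / 3 - x ^ 4 / 4 + x ^ 5 / 5 - x ^ 6 / 6

lemma one_add_mul_one_add_of_add_eq_mul (h : a + b = a * b) :
    (1 + a) * (1 + b) = 1 + 2 * (a * b) := by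
  linear_combination h

lemma logTaylorSix_add_logTaylorSix_of_add_eq_mul [CharZero K] (h : a + b = a * b) :
    logTaylorSix a + logTaylorSix b =
      (2 * (a * b) - (2 * (a * b)) ^ 2 / 2 + (2 * (a * b)) ^ 3 / 3) -
        (a * b) ^ 4 * (165 - 72 * (a * b) + 10 * (a * b) ^ 2) / 60 := by
  -- Newton: `a ^ i + b ^ i` in terms of `s = a + b` and `u = a * b`; here `s = u`.
  have hnewton : ∀ s u : K, s = a + b → u = a * b → logTaylorSix a + logTaylorSix b =
      s - (s ^ 2 - 2 * u) / 2 + (s ^ 3 - 3 * u * s) / 3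
        - (s ^ 4 - 4 * u * s ^ 2 + 2 * u ^ 2) / 4 + (s ^ 5 - 5 * u * s ^ 3 + 5 * u ^ 2 * s) / 5
        - (s ^ 6 - 6 * u * s ^ 4 + 9 * u ^ 2 * s ^ 2 - 2 * u ^ 3) / 6 := by
    rintro s u rfl rfl
    simp only [logTaylorSix]
    ring
  rw [hnewton (a * b) (a * b) h.symm rfl]
  ring

lemma one_add_sum_div_pow_eq_one_add_sum_logTaylorSix (x : K) (s : Finset ℕ) :
    1 + x * (∑ k ∈ s, (1 : K) / (k : K)) - x ^ 2 / 2 * (∑ k ∈ s, (1 : K) / (k : K) ^ 2)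
        + x ^ 3 / 3 * (∑ k ∈ s, (1 : K) / (k : K) ^ 3)
        - x ^ 4 / 4 * (∑ k ∈ s, (1 : K) / (k : K) ^ 4)
        + x ^ 5 / 5 * (∑ k ∈ s, (1 : K) / (k : K) ^ 5)
        - x ^ 6 / 6 * (∑ k ∈ s, (1 : K) / (k : K) ^ 6) =
      1 + ∑ k ∈ s, logTaylorSix (x / k) := by
  simp only [logTaylorSix, sum_add_distrib, sum_sub_distrib, mul_sum, ← add_sub_assoc,
    ← add_assoc]
  ring_nf

end LogTaylorSix

namespace IsUltrametricDist

variable {E : Type*} [SeminormedAddCommGroup E] [IsUltrametricDist E] {x y : E} {C : ℝ}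

lemma norm_add_le_of_le (hx : ‖x‖ ≤ C) (hy : ‖y‖ ≤ C) : ‖x + y‖ ≤ C :=
  (norm_add_le_max x y).trans (max_le hx hy)

lemma norm_sub_le_of_le (hx : ‖x‖ ≤ C) (hy : ‖y‖ ≤ C) : ‖x - y‖ ≤ C :=
  sub_eq_add_neg x y ▸ norm_add_le_of_le hx (by rwa [norm_neg])

end IsUltrametricDist

section Ultrametric

variable {ι K : Type*} [NormedField K] [IsUltrametricDist K] {s : Finset ι} {U : ι → K} {ε : ℝ}

lemma norm_sum_powersetCard_prod_le (hε : 0 ≤ ε) (hU : ∀ i ∈ s, ‖U i‖ ≤ ε) (j : ℕ) :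
    ‖∑ A ∈ s.powersetCard j, ∏ i ∈ A, U i‖ ≤ ε ^ j := by
  refine IsUltrametricDist.norm_sum_le_of_forall_le_of_nonneg (by positivity) fun A hA => ?_
  obtain ⟨hAs, rfl⟩ := mem_powersetCard.1 hA
  rw [norm_prod]
  calc ∏ i ∈ A, ‖U i‖ ≤ ∏ _i ∈ A, ε :=
        prod_le_prod (fun _ _ => norm_nonneg _) fun i hi => hU i (hAs hi)
    _ = ε ^ #A := prod_const ε

lemma norm_prod_one_add_sub_sum_range_le (hε : 0 ≤ ε) (hε1 : ε ≤ 1) (hU : ∀ i ∈ s, ‖U i‖ ≤ ε)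
    (n : ℕ) :
    ‖∏ i ∈ s, (1 + U i) - ∑ j ∈ range n, ∑ A ∈ s.powersetCard j, ∏ i ∈ A, U i‖ ≤ ε ^ n := by
  classical
  have hfull : ∏ i ∈ s, (1 + U i) =
      ∑ j ∈ range (n + #s + 1), ∑ A ∈ s.powersetCard j, ∏ i ∈ A, U i := by
    rw [prod_one_add, sum_powerset]
    refine sum_subset (range_subset_range.2 (by omega)) fun j _ hj => ?_
    rw [powersetCard_eq_empty.2 (by simp at hj; omega), sum_empty]
  rw [hfull, ← sum_range_add_sum_Ico _ (by omega : n ≤ n + #s + 1), add_sub_cancel_left]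
  refine IsUltrametricDist.norm_sum_le_of_forall_le_of_nonneg (by positivity) fun j hj => ?_
  exact (norm_sum_powersetCard_prod_le hε hU j).trans
    (pow_le_pow_of_le_one hε hε1 (mem_Ico.1 hj).1)

lemma norm_sum_pow_le (hε : 0 ≤ ε) (hU : ∀ i ∈ s, ‖U i‖ ≤ ε) (j : ℕ) :
    ‖∑ i ∈ s, U i ^ j‖ ≤ ε ^ j :=
  IsUltrametricDist.norm_sum_le_of_forall_le_of_nonneg (by positivity) fun i hi =>
    (norm_pow _ j).trans_le (pow_le_pow_left₀ (norm_nonneg _) (hU i hi) j)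

lemma norm_prod_one_add_sub_esymm_le (hε : 0 ≤ ε) (hε1 : ε ≤ 1) (hU : ∀ i ∈ s, ‖U i‖ ≤ ε) :
    ‖∏ i ∈ s, (1 + U i) - (1 + ∑ i ∈ s, U i + ∑ A ∈ s.powersetCard 2, ∏ i ∈ A, U i +
      ∑ A ∈ s.powersetCard 3, ∏ i ∈ A, U i)‖ ≤ ε ^ 4 := by
  have := norm_prod_one_add_sub_sum_range_le hε hε1 hU 4
  simp only [sum_range_succ, range_zero, sum_empty, powersetCard_zero, sum_singleton,
    prod_empty, zero_add, sum_powersetCard_one_prod] at this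
  exact this

lemma norm_sum_le_of_norm_prod_one_add_sub_one_le (hε : 0 ≤ ε) (hε1 : ε ≤ 1)
    (hU : ∀ i ∈ s, ‖U i‖ ≤ ε) (hP : ‖∏ i ∈ s, (1 + U i) - 1‖ ≤ ε ^ 2) :
    ‖∑ i ∈ s, U i‖ ≤ ε ^ 2 := by
  set e₂ := ∑ A ∈ s.powersetCard 2, ∏ i ∈ A, U i
  set e₃ := ∑ A ∈ s.powersetCard 3, ∏ i ∈ A, U i
  set R := ∏ i ∈ s, (1 + U i) - (1 + ∑ i ∈ s, U i + e₂ + e₃)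
  have hmono : ∀ {j k : ℕ}, j ≤ k → ε ^ k ≤ ε ^ j := fun h => pow_le_pow_of_le_one hε hε1 h
  rw [show ∑ i ∈ s, U i = (∏ i ∈ s, (1 + U i) - 1) - e₂ - e₃ - R by ring]
  refine IsUltrametricDist.norm_sub_le_of_le (IsUltrametricDist.norm_sub_le_of_le
    (IsUltrametricDist.norm_sub_le_of_le hP (norm_sum_powersetCard_prod_le hε hU 2))
    ((norm_sum_powersetCard_prod_le hε hU 3).trans (hmono (by norm_num))))
    ((norm_prod_one_add_sub_esymm_le hε hε1 hU).trans (hmono (by norm_num)))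

lemma norm_prod_one_add_sub_log_le (h2 : ‖(2 : K)‖ = 1) (h3 : ‖(3 : K)‖ = 1) (hε : 0 ≤ ε)
    (hε1 : ε ≤ 1) (hU : ∀ i ∈ s, ‖U i‖ ≤ ε) (hP : ‖∏ i ∈ s, (1 + U i) - 1‖ ≤ ε ^ 2) :
    ‖∏ i ∈ s, (1 + U i) - (1 + ∑ i ∈ s, (U i - U i ^ 2 / 2 + U i ^ 3 / 3))‖ ≤ ε ^ 4 := by
  have h6 : ‖(6 : K)‖ = 1 := by rw [show (6 : K) = 2 * 3 by norm_num, norm_mul, h2, h3, one_mul]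
  have hS₁ := norm_sum_le_of_norm_prod_one_add_sub_one_le hε hε1 hU hP
  have hS₂ := norm_sum_pow_le hε hU 2
  rw [← sub_add_sub_cancel, one_add_esymm_sub_log_eq (norm_ne_zero_iff.1 (by simp [h2]))
    (norm_ne_zero_iff.1 (by simp [h3]))]
  refine IsUltrametricDist.norm_add_le_of_le (norm_prod_one_add_sub_esymm_le hε hε1 hU)
    (IsUltrametricDist.norm_sub_le_of_le (IsUltrametricDist.norm_add_le_of_le ?_ ?_) ?_)
  · rw [norm_div, h2, div_one, norm_pow, pow_mul' ε 2 2]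
    exact pow_le_pow_left₀ (norm_nonneg _) hS₁ 2
  · rw [norm_div, h6, div_one, norm_pow]
    calc ‖∑ i ∈ s, U i‖ ^ 3 ≤ (ε ^ 2) ^ 3 := pow_le_pow_left₀ (norm_nonneg _) hS₁ 3
      _ = ε ^ 6 := by ring
      _ ≤ ε ^ 4 := pow_le_pow_of_le_one hε hε1 (by norm_num)
  · rw [norm_div, h2, div_one, norm_mul, show ε ^ 4 = ε ^ 2 * ε ^ 2 by ring]
    exact mul_le_mul hS₁ hS₂ (norm_nonneg _) (by positivity)

lemma norm_pow_four_mul_poly_div_sixty_le (h60 : ‖(60 : K)‖ = 1) (hε1 : ε ≤ 1) {T : K}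
    (hT : ‖T‖ ≤ ε) : ‖T ^ 4 * (165 - 72 * T + 10 * T ^ 2) / 60‖ ≤ ε ^ 4 := by
  have hT1 : ‖T‖ ≤ 1 := hT.trans hε1
  have hpoly : ‖(165 : K) - 72 * T + 10 * T ^ 2‖ ≤ 1 := by
    have hnat : ∀ n : ℕ, ‖(n : K)‖ ≤ 1 := IsUltrametricDist.norm_natCast_le_one K
    refine IsUltrametricDist.norm_add_le_of_le (IsUltrametricDist.norm_sub_le_of_le
      (by exact_mod_cast hnat 165) ?_) ?_
    · rw [norm_mul]
      exact mul_le_one₀ (by exact_mod_cast hnat 72) (norm_nonneg _) hT1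
    · rw [norm_mul, norm_pow]
      exact mul_le_one₀ (by exact_mod_cast hnat 10) (by positivity)
        (pow_le_one₀ (norm_nonneg _) hT1)
  rw [norm_div, h60, div_one, norm_mul, norm_pow]
  exact (mul_le_of_le_one_right (by positivity) hpoly).trans
    (pow_le_pow_left₀ (norm_nonneg _) hT 4)

variable [CharZero K] {a b : ι → K}

lemma norm_prod_pairs_sub_logTaylorSix_le (h2 : ‖(2 : K)‖ = 1) (h3 : ‖(3 : K)‖ = 1)
    (h5 : ‖(5 : K)‖ = 1) (hε : 0 ≤ ε) (hε1 : ε ≤ 1) (hab : ∀ i ∈ s, a i + b i = a i * b i)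
    (hT : ∀ i ∈ s, ‖a i * b i‖ ≤ ε) (hP : ‖∏ i ∈ s, (1 + a i) * (1 + b i) - 1‖ ≤ ε ^ 2) :
    ‖∏ i ∈ s, (1 + a i) * (1 + b i) -
      (1 + ∑ i ∈ s, (logTaylorSix (a i) + logTaylorSix (b i)))‖ ≤ ε ^ 4 := by
  set T : ι → K := fun i => a i * b i
  have h60 : ‖(60 : K)‖ = 1 := by
    rw [show (60 : K) = 2 * 2 * 3 * 5 by norm_num, norm_mul, norm_mul, norm_mul, h2, h3, h5]
    norm_num
  have hprod : ∏ i ∈ s, (1 + a i) * (1 + b i) = ∏ i ∈ s, (1 + 2 * T i) :=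
    prod_congr rfl fun i hi => one_add_mul_one_add_of_add_eq_mul (hab i hi)
  have hsum : ∑ i ∈ s, (logTaylorSix (a i) + logTaylorSix (b i)) =
      ∑ i ∈ s, (2 * T i - (2 * T i) ^ 2 / 2 + (2 * T i) ^ 3 / 3) -
        ∑ i ∈ s, T i ^ 4 * (165 - 72 * T i + 10 * T i ^ 2) / 60 := by
    rw [← sum_sub_distrib]
    exact sum_congr rfl fun i hi => logTaylorSix_add_logTaylorSix_of_add_eq_mul (hab i hi)
  have h2T : ∀ i ∈ s, ‖2 * T i‖ ≤ ε := fun i hi => by rw [norm_mul, h2, one_mul]; exact hT i hi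
  rw [hprod] at hP ⊢
  rw [hsum, show ∀ P A B : K, P - (1 + (A - B)) = P - (1 + A) + B from
    fun _ _ _ => by ring]
  exact IsUltrametricDist.norm_add_le_of_le
    (norm_prod_one_add_sub_log_le h2 h3 hε hε1 h2T hP)
    (IsUltrametricDist.norm_sum_le_of_forall_le_of_nonneg (by positivity) fun i hi =>
      norm_pow_four_mul_poly_div_sixty_le h60 hε1 (hT i hi))

end Ultrametric

@[to_additive]
lemma prod_Icc_eq_prod_Icc_mul_reflect {M : Type*} [CommMonoid M] {n m : ℕ} (h : n = 2 * m + 1)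
    (f : ℕ → M) : ∏ k ∈ Icc 1 (n - 1), f k = ∏ k ∈ Icc 1 m, f k * f (n - k) := by
  rw [prod_mul_distrib, ← prod_filter_mul_prod_filter_not (Icc 1 (n - 1)) (· ≤ m)]
  congr 1
  · exact prod_congr (by ext k; simp only [mem_filter, mem_Icc]; omega) fun _ _ => rfl
  · refine prod_nbij' (fun k => n - k) (fun k => n - k) ?_ ?_ ?_ ?_ ?_ <;>
      simp only [mem_filter, mem_Icc] <;> intro k hk
    all_goals first | omega | congr 1; omega

lemma natCast_choose_add_eq_prod {K : Type*} [Field K] [CharZero K] (n k : ℕ) :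
    ((n + k).choose k : K) = ∏ i ∈ Icc 1 k, (1 + (n : K) / i) := by
  induction k with
  | zero => simp
  | succ k ih =>
    have hstep : ((n + k + 1 : ℕ) : K) * (n + k).choose k =
        (n + k + 1).choose (k + 1) * (k + 1) := by
      exact_mod_cast Nat.add_one_mul_choose_eq (n + k) k
    rw [prod_Icc_succ_top (by omega), ← ih, ← add_assoc]
    push_cast at hstep ⊢
    field_simp
    linear_combination -hstep

lemma padicCong_iff_norm {p : ℕ} [Fact p.Prime] {n : ℕ} {x y : ℚ} :
    PadicCong p n x y ↔ ‖(x : ℚ_[p]) - y‖ ≤ (p : ℝ)⁻¹ ^ n := by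
  rw [PadicCong, ← Rat.cast_sub, Padic.eq_padicNorm, zpow_neg, zpow_natCast, ← inv_pow]
  rw [← Rat.cast_le (K := ℝ)]
  push_cast
  rfl

lemma seven_le_of_padicCong_choose {p : ℕ} (hp : p.Prime)
    (hw : PadicCong p 4 ((2 * p - 1).choose (p - 1)) 1) : 7 ≤ p := by
  have := Fact.mk hp
  have hdvd : ((p ^ 4 : ℕ) : ℤ) ∣ ((2 * p - 1).choose (p - 1) : ℤ) - 1 :=
    padicNorm.dvd_iff_norm_le.2 (by push_cast; exact hw)
  by_contra! h
  interval_cases p <;> revert hp hdvd <;> decide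

lemma natCast_div_add_div_sub_eq_mul {K : Type*} [Field K] [CharZero K] {n k : ℕ}
    (hk0 : 0 < k) (hkn : k < n) : (n : K) / k + n / (n - k : ℕ) = n / k * (n / (n - k : ℕ)) := by
  have hk : (k : K) ≠ 0 := by exact_mod_cast hk0.ne'
  have hnk : ((n - k : ℕ) : K) ≠ 0 := by exact_mod_cast (Nat.sub_pos_of_lt hkn).ne'
  field_simp
  rw [Nat.cast_sub hkn.le]
  ring

section Padic

variable {p : ℕ} [hp : Fact p.Prime]

lemma Padic.norm_natCast_eq_one_of_pos_of_lt {k : ℕ} (h0 : 0 < k) (hk : k < p) :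
    ‖(k : ℚ_[p])‖ = 1 :=
  Padic.norm_natCast_eq_one_iff.2 (Nat.coprime_of_lt_prime h0.ne' hk hp.out)

lemma Padic.norm_div_mul_div_natCast_sub {k : ℕ} (h0 : 0 < k) (hk : k < p) :
    ‖(p : ℚ_[p]) / k * (p / (p - k : ℕ))‖ = (p : ℝ)⁻¹ ^ 2 := by
  rw [norm_mul, norm_div, norm_div, Padic.norm_p, norm_natCast_eq_one_of_pos_of_lt h0 hk,
    norm_natCast_eq_one_of_pos_of_lt (Nat.sub_pos_of_lt hk) (Nat.sub_lt hp.out.pos h0)]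
  ring

end Padic

theorem stmt9 (p : ℕ) (hp : p.Prime)
    (hw : PadicCong p 4 ((Nat.choose (2 * p - 1) (p - 1)) : ℚ) 1) :
    PadicCong p 8 ((Nat.choose (2 * p - 1) (p - 1)) : ℚ)
      (1 + (p : ℚ) * (∑ k ∈ Finset.Icc 1 (p - 1), (1 : ℚ) / (k : ℚ)) - (p : ℚ) ^ 2 / 2 * (∑ k ∈ Finset.Icc 1 (p - 1), (1 : ℚ) / (k : ℚ) ^ 2)
        + (p : ℚ) ^ 3 / 3 * (∑ k ∈ Finset.Icc 1 (p - 1), (1 : ℚ) / (k : ℚ) ^ 3) - (p : ℚ) ^ 4 / 4 * (∑ k ∈ Finset.Icc 1 (p - 1), (1 : ℚ) / (k : ℚ) ^ 4)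
        + (p : ℚ) ^ 5 / 5 * (∑ k ∈ Finset.Icc 1 (p - 1), (1 : ℚ) / (k : ℚ) ^ 5) - (p : ℚ) ^ 6 / 6 * (∑ k ∈ Finset.Icc 1 (p - 1), (1 : ℚ) / (k : ℚ) ^ 6)) := by
  have := Fact.mk hp
  have hp7 := seven_le_of_padicCong_choose hp hw
  obtain ⟨m, hm⟩ : Odd p := hp.odd_of_ne_two (by omega)
  have hunit (k : ℕ) (hk : 0 < k ∧ k < 7) : ‖(k : ℚ_[p])‖ = 1 :=
    Padic.norm_natCast_eq_one_of_pos_of_lt hk.1 (by omega)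
  have hC : ((2 * p - 1).choose (p - 1) : ℚ_[p]) =
      ∏ k ∈ Icc 1 m, (1 + (p : ℚ_[p]) / k) * (1 + (p : ℚ_[p]) / (p - k : ℕ)) := by
    rw [show 2 * p - 1 = p + (p - 1) by omega, natCast_choose_add_eq_prod,
      prod_Icc_eq_prod_Icc_mul_reflect hm]
  rw [padicCong_iff_norm] at hw ⊢
  push_cast at hw ⊢
  rw [one_add_sum_div_pow_eq_one_add_sum_logTaylorSix, sum_Icc_eq_sum_Icc_add_reflect hm, hC]
  rw [hC, show (p : ℝ)⁻¹ ^ 4 = ((p : ℝ)⁻¹ ^ 2) ^ 2 by ring] at hw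
  rw [show (p : ℝ)⁻¹ ^ 8 = ((p : ℝ)⁻¹ ^ 2) ^ 4 by ring]
  refine norm_prod_pairs_sub_logTaylorSix_le (by exact_mod_cast hunit 2 (by norm_num))
    (by exact_mod_cast hunit 3 (by norm_num)) (by exact_mod_cast hunit 5 (by norm_num))
    (by positivity) (pow_le_one₀ (by positivity) (inv_le_one_of_one_le₀ (mod_cast hp.one_le)))
    (fun k hk => ?_) (fun k hk => ?_) hw <;> simp only [mem_Icc] at hk
  · exact natCast_div_add_div_sub_eq_mul (by omega) (by omega)
  · exact (Padic.norm_div_mul_div_natCast_sub (by omega) (by omega)).le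
end

section
/- Let p be a Wolstenholme prime. Then C(2p-1, p-1) ≡ 1 + (3p/2)·∑ 1/k - (p²/4)·∑ 1/k² + (7p³/12)·∑ 1/k³ + (5p⁵/12)·∑ 1/k⁵ (mod p⁸), where sums run over k = 1, …, p-1. -/
open Finset

section Expansion

variable {R ι : Type*} [CommRing R] [DecidableEq ι]

/-- Newton's identities `2e₂ = p₁² - p₂` and `6e₃ = p₁³ - 3p₁p₂ + 2p₃` give the coefficients of `c²`
and `c³` in terms of power sums. -/
theorem exists_six_mul_prod_one_add_mul_eq (T : Subring R) {c : R} (hc : c ∈ T) (t : ι → R)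
    (s : Finset ι) (ht : ∀ i ∈ s, t i ∈ T) :
    ∃ ε ∈ T, 6 * ∏ i ∈ s, (1 + c * t i) =
      6 + 6 * c * ∑ i ∈ s, t i + 3 * c ^ 2 * ((∑ i ∈ s, t i) ^ 2 - ∑ i ∈ s, t i ^ 2)
        + c ^ 3 * ((∑ i ∈ s, t i) ^ 3 - 3 * (∑ i ∈ s, t i) * ∑ i ∈ s, t i ^ 2
          + 2 * ∑ i ∈ s, t i ^ 3) + c ^ 4 * ε := by
  induction s using Finset.induction_on with
  | empty => exact ⟨0, T.zero_mem, by simp⟩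
  | insert a s ha ih =>
    obtain ⟨ε, hε, h⟩ := ih fun i hi => ht i (mem_insert_of_mem hi)
    have hta := ht a (mem_insert_self a s)
    have hsum : ∀ j, ∑ i ∈ s, t i ^ j ∈ T := fun j =>
      T.sum_mem fun i hi => T.pow_mem (ht i (mem_insert_of_mem hi)) j
    refine ⟨t a * ((∑ i ∈ s, t i) ^ 3 - 3 * (∑ i ∈ s, t i) * ∑ i ∈ s, t i ^ 2
      + 2 * ∑ i ∈ s, t i ^ 3) + ε * (1 + c * t a), ?_, ?_⟩
    · have h1 : ∑ i ∈ s, t i ∈ T := by simpa using hsum 1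
      clear ht ih
      apply_rules [add_mem, sub_mem, mul_mem, pow_mem, ofNat_mem, one_mem]
    · rw [prod_insert ha, sum_insert ha, sum_insert ha, sum_insert ha, mul_left_comm, h]
      ring

end Expansion

theorem cast_add_choose_eq_prod {K : Type*} [Field K] [CharZero K] (n : ℕ) :
    ∀ m : ℕ, ((n + m).choose m : K) = ∏ k ∈ Icc 1 m, (1 + n / k : K)
  | 0 => by simp
  | m + 1 => by
    rw [prod_Icc_succ_top (by omega), ← cast_add_choose_eq_prod n m, ← add_assoc]
    have h : ((n + m + 1 : ℕ) : K) * (n + m).choose m = (n + m + 1).choose (m + 1) * (m + 1) := by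
      exact_mod_cast Nat.add_one_mul_choose_eq (n + m) m
    have hm : (m : K) + 1 ≠ 0 := Nat.cast_add_one_ne_zero m
    push_cast at h ⊢
    field_simp
    linear_combination -h

@[to_additive]
theorem prod_Icc_sub_reflect {M : Type*} [CommMonoid M] (n : ℕ) (f : ℕ → M) :
    ∏ k ∈ Icc 1 (n - 1), f (n - k) = ∏ k ∈ Icc 1 (n - 1), f k := by
  refine prod_nbij' (n - ·) (n - ·) ?_ ?_ ?_ ?_ fun _ _ => rfl <;>
    intro k hk <;> simp only [mem_Icc] at hk ⊢ <;> omega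

section PadicCong

variable {p : ℕ} [hp : Fact p.Prime]

variable (p) in
def pIntegers : Subring ℚ where
  carrier := {x | padicNorm p x ≤ 1}
  mul_mem' {x y} hx hy := by
    change padicNorm p (x * y) ≤ 1
    exact (padicNorm.mul x y).trans_le (mul_le_one₀ hx (padicNorm.nonneg y) hy)
  one_mem' := padicNorm.one.le
  add_mem' hx hy := padicNorm.nonarchimedean.trans (max_le hx hy)
  zero_mem' := by simp [padicNorm.zero]
  neg_mem' {x} hx := by simpa [padicNorm.neg] using hx

theorem mem_pIntegers {x : ℚ} : x ∈ pIntegers p ↔ padicNorm p x ≤ 1 := Iff.rfl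

theorem inv_natCast_mem_pIntegers {n : ℕ} (hn : ¬ p ∣ n) : (n : ℚ)⁻¹ ∈ pIntegers p := by
  rw [mem_pIntegers, IsAbsoluteValue.abv_inv (padicNorm p), (padicNorm.nat_eq_one_iff n).2 hn,
    inv_one]

theorem inv_natCast_mem_pIntegers_of_lt {n : ℕ} (h0 : 0 < n) (hn : n < p) :
    (n : ℚ)⁻¹ ∈ pIntegers p :=
  inv_natCast_mem_pIntegers fun h => (Nat.le_of_dvd h0 h).not_gt hn

theorem inv_ofNat_mem_pIntegers (n : ℕ) [n.AtLeastTwo] (hn : n < p) :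
    (ofNat(n) : ℚ)⁻¹ ∈ pIntegers p := by
  have := inv_natCast_mem_pIntegers_of_lt (p := p) (n := ofNat(n))
    (Nat.zero_lt_of_lt Nat.AtLeastTwo.one_lt) hn
  rwa [Nat.cast_ofNat] at this

theorem padicCong_intCast_iff {n : ℕ} {a b : ℤ} :
    PadicCong p n a b ↔ (p : ℤ) ^ n ∣ a - b := by
  rw [PadicCong, ← Int.cast_sub, ← padicNorm.dvd_iff_norm_le, Nat.cast_pow]

theorem padicCong_iff_div_mem {n : ℕ} {a b : ℚ} :
    PadicCong p n a b ↔ (a - b) / p ^ n ∈ pIntegers p := by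
  have hp : (0 : ℚ) < p := Nat.cast_pos.2 hp.out.pos
  rw [mem_pIntegers, padicNorm.div, IsAbsoluteValue.abv_pow (padicNorm p),
    padicNorm.padicNorm_p_of_prime, div_le_one (by positivity), PadicCong, inv_pow, zpow_neg,
    zpow_natCast]

theorem padicCong_of_eq_add_mul {n : ℕ} {a b y : ℚ} (hy : y ∈ pIntegers p)
    (h : a = b + p ^ n * y) : PadicCong p n a b := by
  have hp : (p : ℚ) ^ n ≠ 0 := pow_ne_zero _ (Nat.cast_ne_zero.2 hp.out.ne_zero)
  rwa [padicCong_iff_div_mem, h, add_sub_cancel_left, mul_div_cancel_left₀ _ hp]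

theorem PadicCong.exists_eq_add_mul {n : ℕ} {a b : ℚ} (h : PadicCong p n a b) :
    ∃ y ∈ pIntegers p, a = b + p ^ n * y := by
  have hp : (p : ℚ) ^ n ≠ 0 := pow_ne_zero _ (Nat.cast_ne_zero.2 hp.out.ne_zero)
  exact ⟨_, padicCong_iff_div_mem.1 h, by rw [mul_div_cancel₀ _ hp]; ring⟩

theorem PadicCong.trans {n : ℕ} {a b c : ℚ} (hab : PadicCong p n a b) (hbc : PadicCong p n b c) :
    PadicCong p n a c := by
  unfold PadicCong at *
  rw [← sub_add_sub_cancel a b c]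
  exact padicNorm.nonarchimedean.trans (max_le hab hbc)

theorem PadicCong.of_le {m n : ℕ} {a b : ℚ} (h : PadicCong p n a b) (hmn : m ≤ n) :
    PadicCong p m a b :=
  (show padicNorm p (a - b) ≤ _ from h).trans
    (zpow_le_zpow_right₀ (Nat.one_le_cast.2 hp.out.one_lt.le) (by omega))

theorem PadicCong.of_sq {n : ℕ} {a b : ℚ} (h : PadicCong p n (a ^ 2) (b ^ 2))
    (hab : padicNorm p (a + b) = 1) : PadicCong p n a b := by
  rwa [PadicCong, sq_sub_sq, padicNorm.mul, hab, one_mul] at h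

theorem padicNorm_add_eq_one_of_padicCong_one (hp2 : p ≠ 2) {a b : ℚ} (ha : PadicCong p 1 a 1)
    (hb : PadicCong p 1 b 1) : padicNorm p (a + b) = 1 := by
  have h2 : padicNorm p 2 = 1 := by
    simpa using (padicNorm.nat_eq_one_iff 2).2
      fun h => hp2 ((Nat.prime_dvd_prime_iff_eq hp.out Nat.prime_two).1 h)
  have hlt : padicNorm p ((a - 1) + (b - 1)) < 1 := by
    refine (padicNorm.nonarchimedean.trans (max_le ha hb)).trans_lt ?_
    exact zpow_lt_one_of_neg₀ (Nat.one_lt_cast.2 hp.out.one_lt) (by norm_num)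
  rw [show a + b = (a - 1) + (b - 1) + 2 by ring,
    padicNorm.add_eq_max_of_ne (by rw [h2]; exact hlt.ne), h2, max_eq_right hlt.le]

end PadicCong

def pairRecip (n k : ℕ) : ℚ := ((k : ℚ) * (n - k))⁻¹

def pairPowSum (n j : ℕ) : ℚ := ∑ k ∈ Icc 1 (n - 1), pairRecip n k ^ j

def pairApprox (n : ℕ) : ℚ :=
  1 + n ^ 2 * pairPowSum n 1 - n ^ 4 * pairPowSum n 2 + 4 / 3 * n ^ 6 * pairPowSum n 3

theorem natCast_sub_ne_zero_of_mem_Icc {n k : ℕ} (hk : k ∈ Icc 1 (n - 1)) : (n : ℚ) - k ≠ 0 := by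
  rw [mem_Icc] at hk
  exact sub_ne_zero.2 (Nat.cast_injective.ne (by omega))

theorem natCast_ne_zero_of_mem_Icc {n k : ℕ} (hk : k ∈ Icc 1 (n - 1)) : (k : ℚ) ≠ 0 := by
  rw [mem_Icc] at hk
  exact Nat.cast_ne_zero.2 (by omega)

theorem cast_choose_sq_eq_prod (n : ℕ) :
    ((2 * n - 1).choose (n - 1) : ℚ) ^ 2 =
      ∏ k ∈ Icc 1 (n - 1), (1 + 2 * n ^ 2 * pairRecip n k) := by
  have h := cast_add_choose_eq_prod (K := ℚ) n (n - 1)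
  rw [show n + (n - 1) = 2 * n - 1 by omega] at h
  rw [sq]
  nth_rw 1 [h, ← prod_Icc_sub_reflect, h, ← prod_mul_distrib]
  refine prod_congr rfl fun k hk => ?_
  have hk0 := natCast_ne_zero_of_mem_Icc hk
  have hk1 := natCast_sub_ne_zero_of_mem_Icc hk
  rw [Nat.cast_sub (by rw [mem_Icc] at hk; omega), pairRecip]
  field_simp
  ring

theorem pairRecip_mem_pIntegers {p k : ℕ} [hp : Fact p.Prime] (hk : k ∈ Icc 1 (p - 1)) :
    pairRecip p k ∈ pIntegers p := by
  rw [mem_Icc] at hk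
  have hndvd : ¬ p ∣ k * (p - k) := fun h => by
    rcases (Nat.Prime.dvd_mul hp.out).1 h with h | h <;>
      have := Nat.le_of_dvd (by omega) h <;> omega
  have := inv_natCast_mem_pIntegers hndvd
  rwa [Nat.cast_mul, Nat.cast_sub (by omega)] at this

theorem pairPowSum_mem_pIntegers (p : ℕ) [Fact p.Prime] (j : ℕ) : pairPowSum p j ∈ pIntegers p :=
  sum_mem fun _ hk => pow_mem (pairRecip_mem_pIntegers hk) j

theorem exists_six_mul_cast_choose_sq_eq (p : ℕ) [Fact p.Prime] :
    ∃ ε ∈ pIntegers p, 6 * ((2 * p - 1).choose (p - 1) : ℚ) ^ 2 =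
      6 + 12 * p ^ 2 * pairPowSum p 1 + 12 * p ^ 4 * (pairPowSum p 1 ^ 2 - pairPowSum p 2)
        + 8 * p ^ 6 * (pairPowSum p 1 ^ 3 - 3 * pairPowSum p 1 * pairPowSum p 2
          + 2 * pairPowSum p 3) + 16 * p ^ 8 * ε := by
  have hc : 2 * (p : ℚ) ^ 2 ∈ pIntegers p := by
    apply_rules [mul_mem, pow_mem, natCast_mem, ofNat_mem]
  obtain ⟨ε, hε, h⟩ := exists_six_mul_prod_one_add_mul_eq (pIntegers p) hc (pairRecip p)
    (Icc 1 (p - 1)) fun _ => pairRecip_mem_pIntegers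
  refine ⟨ε, hε, ?_⟩
  rw [cast_choose_sq_eq_prod, h]
  simp only [pairPowSum, pow_one]
  ring

theorem inv_pow_combination_add_eq {s x y : ℚ} (hx : x ≠ 0) (hy : y ≠ 0) (hs : x + y = s) :
    3 * s / 2 * (1 / x + 1 / y) - s ^ 2 / 4 * (1 / x ^ 2 + 1 / y ^ 2)
      + 7 * s ^ 3 / 12 * (1 / x ^ 3 + 1 / y ^ 3) + 5 * s ^ 5 / 12 * (1 / x ^ 5 + 1 / y ^ 5)
      = 2 * (s ^ 2 * (x * y)⁻¹ - s ^ 4 * (x * y)⁻¹ ^ 2 + 4 / 3 * s ^ 6 * (x * y)⁻¹ ^ 3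
        - 25 / 24 * s ^ 8 * (x * y)⁻¹ ^ 4 + 5 / 24 * s ^ 10 * (x * y)⁻¹ ^ 5) := by
  subst hs
  field_simp
  ring

theorem harmonic_combination_eq_pairPowSum (n : ℕ) :
    1 + 3 * (n : ℚ) / 2 * (∑ k ∈ Icc 1 (n - 1), (1 : ℚ) / k)
        - (n : ℚ) ^ 2 / 4 * (∑ k ∈ Icc 1 (n - 1), (1 : ℚ) / k ^ 2)
        + 7 * (n : ℚ) ^ 3 / 12 * (∑ k ∈ Icc 1 (n - 1), (1 : ℚ) / k ^ 3)
        + 5 * (n : ℚ) ^ 5 / 12 * (∑ k ∈ Icc 1 (n - 1), (1 : ℚ) / k ^ 5)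
      = 1 + n ^ 2 * pairPowSum n 1 - n ^ 4 * pairPowSum n 2 + 4 / 3 * n ^ 6 * pairPowSum n 3
        - 25 / 24 * n ^ 8 * pairPowSum n 4 + 5 / 24 * n ^ 10 * pairPowSum n 5 := by
  set f : ℕ → ℚ := fun k => 3 * (n : ℚ) / 2 * (1 / k) - (n : ℚ) ^ 2 / 4 * (1 / k ^ 2)
    + 7 * (n : ℚ) ^ 3 / 12 * (1 / k ^ 3) + 5 * (n : ℚ) ^ 5 / 12 * (1 / k ^ 5) with hf
  have key : 2 * ∑ k ∈ Icc 1 (n - 1), f k = ∑ k ∈ Icc 1 (n - 1), 2 * (n ^ 2 * pairRecip n k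
      - n ^ 4 * pairRecip n k ^ 2 + 4 / 3 * n ^ 6 * pairRecip n k ^ 3
      - 25 / 24 * n ^ 8 * pairRecip n k ^ 4 + 5 / 24 * n ^ 10 * pairRecip n k ^ 5) := by
    nth_rw 1 [two_mul, ← sum_Icc_sub_reflect, ← sum_add_distrib]
    refine sum_congr rfl fun k hk => ?_
    simp only [hf]
    rw [Nat.cast_sub (by rw [mem_Icc] at hk; omega), pairRecip]
    linear_combination inv_pow_combination_add_eq (natCast_ne_zero_of_mem_Icc hk)
      (natCast_sub_ne_zero_of_mem_Icc hk) (add_sub_cancel _ _)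
  simp only [hf, pairPowSum, pow_one, ← mul_sum, sum_add_distrib, sum_sub_distrib] at key ⊢
  linear_combination key / 2

section Wolstenholme

variable {p : ℕ} [hp : Fact p.Prime]

theorem five_le_of_padicCong_choose
    (hw : PadicCong p 4 ((2 * p - 1).choose (p - 1) : ℚ) 1) : 5 ≤ p := by
  have hdvd := (padicCong_intCast_iff (b := 1)).1 (by exact_mod_cast hw)
  by_contra! h
  have := hp.out
  interval_cases p <;> first | (revert hdvd; decide) | norm_num at this

theorem exists_pairPowSum_one_eq_sq_mul (hp5 : 5 ≤ p)
    (hw : PadicCong p 4 ((2 * p - 1).choose (p - 1) : ℚ) 1) :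
    ∃ V ∈ pIntegers p, pairPowSum p 1 = p ^ 2 * V := by
  obtain ⟨w, hw, hA⟩ := hw.exists_eq_add_mul
  obtain ⟨ε, hε, hexp⟩ := exists_six_mul_cast_choose_sq_eq p
  have hU := pairPowSum_mem_pIntegers p
  have h2 := inv_ofNat_mem_pIntegers (p := p) 2 (by omega)
  have h3 := inv_ofNat_mem_pIntegers (p := p) 3 (by omega)
  refine ⟨w + p ^ 4 * w ^ 2 / 2 - (pairPowSum p 1 ^ 2 - pairPowSum p 2)
    - 2 / 3 * p ^ 2 * (pairPowSum p 1 ^ 3 - 3 * pairPowSum p 1 * pairPowSum p 2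
      + 2 * pairPowSum p 3) - 4 / 3 * p ^ 4 * ε, ?_, ?_⟩
  · simp only [div_eq_mul_inv]
    aesop (add safe apply [add_mem, sub_mem, mul_mem, pow_mem, natCast_mem, ofNat_mem])
  · have hp0 : (12 * p ^ 2 : ℚ) ≠ 0 := by have := hp.out.pos; positivity
    refine mul_left_cancel₀ hp0 ?_
    linear_combination -hexp + 6 * ((2 * p - 1).choose (p - 1) + 1 + p ^ 4 * w) * hA

theorem cast_choose_sq_padicCong (hp5 : 5 ≤ p) {V : ℚ} (hV : V ∈ pIntegers p)
    (hU1 : pairPowSum p 1 = p ^ 2 * V) :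
    PadicCong p 8 (((2 * p - 1).choose (p - 1) : ℚ) ^ 2) (pairApprox p ^ 2) := by
  obtain ⟨ε, hε, hexp⟩ := exists_six_mul_cast_choose_sq_eq p
  have hU := pairPowSum_mem_pIntegers p
  have h3 := inv_ofNat_mem_pIntegers (p := p) 3 (by omega)
  refine padicCong_of_eq_add_mul (y := 2 * V ^ 2 + 4 / 3 * p ^ 4 * V ^ 3 - 4 * V * pairPowSum p 2
    + 8 / 3 * ε - (V - pairPowSum p 2 + 4 / 3 * p ^ 2 * pairPowSum p 3) ^ 2) ?_ ?_
  · simp only [div_eq_mul_inv]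
    aesop (add safe apply [add_mem, sub_mem, mul_mem, pow_mem, natCast_mem, ofNat_mem])
  · rw [pairApprox]
    rw [hU1] at hexp ⊢
    linear_combination hexp / 6

theorem pairApprox_padicCong_one (hp5 : 5 ≤ p) : PadicCong p 1 (pairApprox p) 1 := by
  have hU := pairPowSum_mem_pIntegers p
  have h3 := inv_ofNat_mem_pIntegers (p := p) 3 (by omega)
  refine padicCong_of_eq_add_mul (y := p * pairPowSum p 1 - p ^ 3 * pairPowSum p 2
    + 4 / 3 * p ^ 5 * pairPowSum p 3) ?_ (by rw [pairApprox]; ring)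
  simp only [div_eq_mul_inv]
  aesop (add safe apply [add_mem, sub_mem, mul_mem, pow_mem, natCast_mem, ofNat_mem])

theorem pairApprox_padicCong_harmonic (hp5 : 5 ≤ p) :
    PadicCong p 8 (pairApprox p)
      (1 + 3 * (p : ℚ) / 2 * (∑ k ∈ Icc 1 (p - 1), (1 : ℚ) / k)
        - (p : ℚ) ^ 2 / 4 * (∑ k ∈ Icc 1 (p - 1), (1 : ℚ) / k ^ 2)
        + 7 * (p : ℚ) ^ 3 / 12 * (∑ k ∈ Icc 1 (p - 1), (1 : ℚ) / k ^ 3)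
        + 5 * (p : ℚ) ^ 5 / 12 * (∑ k ∈ Icc 1 (p - 1), (1 : ℚ) / k ^ 5)) := by
  have hU := pairPowSum_mem_pIntegers p
  have h24 : (24 : ℚ)⁻¹ ∈ pIntegers p := by
    rw [show (24 : ℚ)⁻¹ = 2⁻¹ ^ 3 * 3⁻¹ by norm_num]
    exact mul_mem (pow_mem (inv_ofNat_mem_pIntegers 2 (by omega)) 3)
      (inv_ofNat_mem_pIntegers 3 (by omega))
  refine padicCong_of_eq_add_mul
    (y := 25 / 24 * pairPowSum p 4 - 5 / 24 * p ^ 2 * pairPowSum p 5) ?_ ?_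
  · simp only [div_eq_mul_inv]
    aesop (add safe apply [add_mem, sub_mem, mul_mem, pow_mem, natCast_mem, ofNat_mem])
  · rw [harmonic_combination_eq_pairPowSum, pairApprox]
    ring

end Wolstenholme

theorem stmt10 (p : ℕ) (hp : p.Prime)
    (hw : PadicCong p 4 ((Nat.choose (2 * p - 1) (p - 1)) : ℚ) 1) :
    PadicCong p 8 ((Nat.choose (2 * p - 1) (p - 1)) : ℚ)
      (1 + 3 * (p : ℚ) / 2 * (∑ k ∈ Finset.Icc 1 (p - 1), (1 : ℚ) / (k : ℚ)) - (p : ℚ) ^ 2 / 4 * (∑ k ∈ Finset.Icc 1 (p - 1), (1 : ℚ) / (k : ℚ) ^ 2)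
        + 7 * (p : ℚ) ^ 3 / 12 * (∑ k ∈ Finset.Icc 1 (p - 1), (1 : ℚ) / (k : ℚ) ^ 3) + 5 * (p : ℚ) ^ 5 / 12 * (∑ k ∈ Finset.Icc 1 (p - 1), (1 : ℚ) / (k : ℚ) ^ 5)) := by
  have := Fact.mk hp
  have hp5 := five_le_of_padicCong_choose hw
  obtain ⟨V, hV, hU1⟩ := exists_pairPowSum_one_eq_sq_mul hp5 hw
  have hsum_unit := padicNorm_add_eq_one_of_padicCong_one (by omega) (hw.of_le (by norm_num))
    (pairApprox_padicCong_one hp5)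
  exact ((cast_choose_sq_padicCong hp5 hV hU1).of_sq hsum_unit).trans
    (pairApprox_padicCong_harmonic hp5)
end

section
/- For any prime p ≥ 11, p·R_6(p) ≡ -(2/5)·R_5(p) (mod p⁴), where R_n(p) = ∑_{k=1}^{p-1} 1/k^n. -/
open Finset
open scoped Ring

lemma sum_Icc_one_sub_reflect {M : Type*} [AddCommMonoid M] (f : ℕ → M) (p : ℕ) :
    ∑ k ∈ Icc 1 (p - 1), f (p - k) = ∑ k ∈ Icc 1 (p - 1), f k := by
  have hIcc : Icc 1 (p - 1) = Ico 1 p := by ext; simp only [mem_Icc, mem_Ico]; omega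
  rw [hIcc, sum_Ico_reflect f 1 (Nat.le_succ p), Nat.add_sub_cancel_left, Nat.add_sub_cancel]

section NegativeBinomial

variable {R : Type*} [CommRing R] {t w π a u v : R}

-- `1, 5, 15, 35` are the first coefficients `(j+4 choose 4)` of `(1 - t)⁻⁵`; the cofactor is
-- `(1 - (1 - t)⁵ (1 + 5t + 15t² + 35t³)) / t⁴ · w⁵`, and likewise for the exponent 7 below.
lemma pow_four_dvd_pow_five_sub_of_one_sub_mul_eq_one (h : (1 - t) * w = 1) :
    t ^ 4 ∣ w ^ 5 - (1 + 5 * t + 15 * t ^ 2 + 35 * t ^ 3) := by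
  have h5 : ((1 - t) * w) ^ 5 = 1 := by rw [h, one_pow]
  exact ⟨(70 - 224 * t + 280 * t ^ 2 - 160 * t ^ 3 + 35 * t ^ 4) * w ^ 5,
    by linear_combination (1 + 5 * t + 15 * t ^ 2 + 35 * t ^ 3) * h5⟩

lemma sq_dvd_pow_seven_sub_of_one_sub_mul_eq_one (h : (1 - t) * w = 1) :
    t ^ 2 ∣ w ^ 7 - (1 + 7 * t) := by
  have h7 : ((1 - t) * w) ^ 7 = 1 := by rw [h, one_pow]
  exact ⟨(28 - 112 * t + 210 * t ^ 2 - 224 * t ^ 3 + 140 * t ^ 4 - 48 * t ^ 5 + 7 * t ^ 6)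
    * w ^ 7, by linear_combination (1 + 7 * t) * h7⟩

lemma exists_inv_one_sub_mul_of_inv_sub (hu : a * u = 1) (hv : (π - a) * v = 1) :
    ∃ w, (1 - π * u) * w = 1 ∧ v = -(u * w) :=
  ⟨-(a * v), by linear_combination π * v * hu + hv, by linear_combination (-v) * hu⟩

lemma pow_four_dvd_inv_pow_five_add (hu : a * u = 1) (hv : (π - a) * v = 1) :
    π ^ 4 ∣ u ^ 5 + v ^ 5 + 5 * π * u ^ 6 + 15 * π ^ 2 * u ^ 7 + 35 * π ^ 3 * u ^ 8 := by
  obtain ⟨w, hw, rfl⟩ := exists_inv_one_sub_mul_of_inv_sub hu hv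
  obtain ⟨c, hc⟩ := pow_four_dvd_pow_five_sub_of_one_sub_mul_eq_one hw
  exact ⟨-(u ^ 9 * c), by linear_combination (-u ^ 5) * hc⟩

lemma sq_dvd_inv_pow_seven_add (hu : a * u = 1) (hv : (π - a) * v = 1) :
    π ^ 2 ∣ u ^ 7 + v ^ 7 + 7 * π * u ^ 8 := by
  obtain ⟨w, hw, rfl⟩ := exists_inv_one_sub_mul_of_inv_sub hu hv
  obtain ⟨c, hc⟩ := sq_dvd_pow_seven_sub_of_one_sub_mul_eq_one hw
  exact ⟨-(u ^ 9 * c), by linear_combination (-u ^ 7) * hc⟩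

end NegativeBinomial

-- The paper's `R_n(p)`, taken in any ring where `1, …, p - 1` are invertible.
noncomputable def invPowSum (R : Type*) [Semiring R] (p n : ℕ) : R :=
  ∑ k ∈ Icc 1 (p - 1), (k : R)⁻¹ʳ ^ n

lemma map_ringInverse {M N F : Type*} [MonoidWithZero M] [MonoidWithZero N] [FunLike F M N]
    [MonoidWithZeroHomClass F M N] (f : F) {x : M} (hx : IsUnit x) : f x⁻¹ʳ = (f x)⁻¹ʳ := by
  obtain ⟨u, rfl⟩ := hx
  rw [Ring.inverse_unit]
  exact (Ring.inverse_unit (Units.map (f : M →* N) u)).symm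

lemma map_invPowSum {R S : Type*} [Semiring R] [Semiring S] (f : R →+* S) {p : ℕ}
    (hunit : ∀ k ∈ Icc 1 (p - 1), IsUnit (k : R)) (n : ℕ) :
    f (invPowSum R p n) = invPowSum S p n := by
  simp only [invPowSum, map_sum, map_pow]
  refine sum_congr rfl fun k hk => ?_
  rw [map_ringInverse f (hunit k hk), map_natCast]

lemma invPowSum_eq_sum_one_div (K : Type*) [DivisionRing K] (p n : ℕ) :
    invPowSum K p n = ∑ k ∈ Icc 1 (p - 1), 1 / (k : K) ^ n := by
  simp only [invPowSum, Ring.inverse_eq_inv', one_div, inv_pow]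

section Pairing

variable {R : Type*} [CommRing R] {p : ℕ}

lemma two_mul_invPowSum (n : ℕ) :
    2 * invPowSum R p n = ∑ k ∈ Icc 1 (p - 1), ((k : R)⁻¹ʳ ^ n + ((p : R) - k)⁻¹ʳ ^ n) := by
  rw [two_mul]
  nth_rewrite 2 [invPowSum]
  rw [← sum_Icc_one_sub_reflect, invPowSum, ← sum_add_distrib]
  refine sum_congr rfl fun k hk => ?_
  rw [Nat.cast_sub (by simp only [mem_Icc] at hk; omega)]

lemma mul_ringInverse_natCast_and_sub (hunit : ∀ k ∈ Icc 1 (p - 1), IsUnit (k : R)) {k : ℕ}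
    (hk : k ∈ Icc 1 (p - 1)) :
    (k : R) * (k : R)⁻¹ʳ = 1 ∧ ((p : R) - k) * ((p : R) - k)⁻¹ʳ = 1 := by
  have hpk : p - k ∈ Icc 1 (p - 1) := by simp only [mem_Icc] at hk ⊢; omega
  refine ⟨Ring.mul_inverse_cancel _ (hunit k hk), Ring.mul_inverse_cancel _ ?_⟩
  rw [← Nat.cast_sub (by simp only [mem_Icc] at hk; omega)]
  exact hunit _ hpk

lemma pow_four_dvd_two_mul_invPowSum_five_add (hunit : ∀ k ∈ Icc 1 (p - 1), IsUnit (k : R)) :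
    (p : R) ^ 4 ∣ 2 * invPowSum R p 5 + 5 * p * invPowSum R p 6
      + 15 * p ^ 2 * invPowSum R p 7 + 35 * p ^ 3 * invPowSum R p 8 := by
  rw [two_mul_invPowSum]
  simp only [invPowSum, mul_sum, ← sum_add_distrib]
  refine dvd_sum fun k hk => ?_
  obtain ⟨hu, hv⟩ := mul_ringInverse_natCast_and_sub hunit hk
  exact pow_four_dvd_inv_pow_five_add hu hv

lemma sq_dvd_two_mul_invPowSum_seven_add (hunit : ∀ k ∈ Icc 1 (p - 1), IsUnit (k : R)) :
    (p : R) ^ 2 ∣ 2 * invPowSum R p 7 + 7 * p * invPowSum R p 8 := by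
  rw [two_mul_invPowSum]
  simp only [invPowSum, mul_sum, ← sum_add_distrib]
  refine dvd_sum fun k hk => ?_
  obtain ⟨hu, hv⟩ := mul_ringInverse_natCast_and_sub hunit hk
  exact sq_dvd_inv_pow_seven_add hu hv

lemma pow_four_dvd_five_mul_invPowSum_six_add (hunit : ∀ k ∈ Icc 1 (p - 1), IsUnit (k : R))
    (htwo : IsUnit (2 : R)) (h8 : (p : R) ∣ invPowSum R p 8) :
    (p : R) ^ 4 ∣ 5 * p * invPowSum R p 6 + 2 * invPowSum R p 5 := by
  have h7 : (p : R) ^ 2 ∣ invPowSum R p 7 := by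
    rw [← htwo.dvd_mul_left]
    have h7' : (p : R) ^ 2 ∣ 7 * p * invPowSum R p 8 := by
      rw [sq, mul_comm (7 : R), mul_assoc]
      exact mul_dvd_mul_left _ (dvd_mul_of_dvd_right h8 _)
    exact (dvd_add_left h7').mp (sq_dvd_two_mul_invPowSum_seven_add hunit)
  have h78 : (p : R) ^ 4 ∣ 15 * p ^ 2 * invPowSum R p 7 + 35 * p ^ 3 * invPowSum R p 8 := by
    refine dvd_add ?_ ?_
    · rw [show (p : R) ^ 4 = p ^ 2 * p ^ 2 by ring, mul_comm (15 : R), mul_assoc]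
      exact mul_dvd_mul_left _ (dvd_mul_of_dvd_right h7 _)
    · rw [show (p : R) ^ 4 = p ^ 3 * p by ring, mul_comm (35 : R), mul_assoc]
      exact mul_dvd_mul_left _ (dvd_mul_of_dvd_right h8 _)
  have h := pow_four_dvd_two_mul_invPowSum_five_add hunit
  rw [add_assoc] at h
  rw [add_comm]
  exact (dvd_add_left h78).mp h

end Pairing

lemma sum_Icc_natCast_eq_sum_univ {M : Type*} [AddCommMonoid M] {p : ℕ} [NeZero p]
    (f : ZMod p → M) (hf : f 0 = 0) : ∑ k ∈ Icc 1 (p - 1), f k = ∑ x, f x := by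
  rw [← sum_erase univ hf]
  refine sum_nbij' (fun k => (k : ZMod p)) ZMod.val ?_ ?_ ?_ ?_ fun _ _ => rfl
  · intro k hk
    simp only [mem_Icc] at hk
    simp only [mem_erase, mem_univ, and_true, ne_eq, ZMod.natCast_eq_zero_iff]
    exact fun h => absurd (Nat.le_of_dvd (by omega) h) (by omega)
  · intro x hx
    simp only [mem_erase, mem_univ, and_true] at hx
    have := ZMod.val_lt x
    have := (ZMod.val_ne_zero x).mpr hx
    simp only [mem_Icc]
    omega
  · intro k hk
    simp only [mem_Icc] at hk
    exact ZMod.val_cast_of_lt (by omega)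
  · intro x _
    exact ZMod.natCast_zmod_val x

section Padic

variable {p : ℕ} [Fact p.Prime]

lemma invPowSum_zmod_eq_zero {m : ℕ} (hm0 : 0 < m) (hm : m < p - 1) :
    invPowSum (ZMod p) p m = 0 := by
  rw [invPowSum_eq_sum_one_div,
    sum_Icc_natCast_eq_sum_univ (fun x => 1 / x ^ m) (by simp [zero_pow hm0.ne'])]
  simp only [one_div, ← inv_pow]
  exact (Equiv.sum_comp (Equiv.inv (ZMod p)) (· ^ m)).trans
    (FiniteField.sum_pow_lt_card_sub_one _ m (by rwa [ZMod.card]))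

lemma isUnit_natCast_padicInt {k : ℕ} (hk : k ∈ Icc 1 (p - 1)) : IsUnit (k : ℤ_[p]) := by
  simp only [mem_Icc] at hk
  rw [PadicInt.isUnit_iff, PadicInt.norm_natCast_eq_one_iff]
  exact Nat.coprime_of_lt_prime (by omega) (by omega) Fact.out

lemma p_dvd_invPowSum_padicInt {m : ℕ} (hm0 : 0 < m) (hm : m < p - 1) :
    (p : ℤ_[p]) ∣ invPowSum ℤ_[p] p m := by
  rw [← Ideal.mem_span_singleton, ← PadicInt.maximalIdeal_eq_span_p, ← PadicInt.ker_toZMod,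
    RingHom.mem_ker, map_invPowSum _ fun k hk => isUnit_natCast_padicInt hk]
  exact invPowSum_zmod_eq_zero hm0 hm

lemma padicCong_of_dvd {a b : ℚ} {x : ℤ_[p]} {n : ℕ}
    (hx : ((a - b : ℚ) : ℚ_[p]) = algebraMap ℤ_[p] ℚ_[p] x) (hdvd : (p : ℤ_[p]) ^ n ∣ x) :
    PadicCong p n a b := by
  rw [← Ideal.mem_span_singleton, ← PadicInt.norm_le_pow_iff_mem_span_pow, PadicInt.norm_def,
    ← PadicInt.algebraMap_apply, ← hx, Padic.eq_padicNorm] at hdvd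
  have hcast : ((padicNorm p (a - b) : ℚ) : ℝ) ≤ (((p : ℚ) ^ (-(n : ℤ)) : ℚ) : ℝ) := by
    push_cast
    exact hdvd
  exact_mod_cast hcast

lemma PadicCong.of_mul_left {a b c : ℚ} {n : ℕ} (hc : padicNorm p c = 1)
    (h : PadicCong p n (c * a) (c * b)) : PadicCong p n a b := by
  rwa [PadicCong, ← mul_sub, padicNorm.mul, hc, one_mul] at h

end Padic

theorem stmt15 (p : ℕ) (hp : p.Prime) (h11 : 11 ≤ p) :
    PadicCong p 4 ((p : ℚ) * (∑ k ∈ Finset.Icc 1 (p - 1), (1 : ℚ) / (k : ℚ) ^ 6)) (-(2 / 5 : ℚ) * (∑ k ∈ Finset.Icc 1 (p - 1), (1 : ℚ) / (k : ℚ) ^ 5)) := by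
  have := Fact.mk hp
  have hunit : ∀ k ∈ Icc 1 (p - 1), IsUnit (k : ℤ_[p]) := fun k hk => isUnit_natCast_padicInt hk
  have hdvd := pow_four_dvd_five_mul_invPowSum_six_add hunit
    (by exact_mod_cast hunit 2 (by simp only [mem_Icc]; omega))
    (p_dvd_invPowSum_padicInt (m := 8) (by norm_num) (by omega))
  have hfive : padicNorm p 5 = 1 := by
    rw [show (5 : ℚ) = (5 : ℕ) by norm_num, padicNorm.nat_eq_one_iff]
    exact fun h => absurd (Nat.le_of_dvd (by norm_num) h) (by omega)
  refine PadicCong.of_mul_left hfive (padicCong_of_dvd ?_ hdvd)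
  simp only [map_add, map_mul, map_ofNat, map_natCast, map_invPowSum _ hunit,
    invPowSum_eq_sum_one_div]
  push_cast
  ring
end
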